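/- Let $\theta > 0$ and $n \geq 1$. For all $H \geq 1$ and $b \in (0,1)$, the integral $\int \frac{dx}{(1 + \max_i |x_i|)^{1+\theta}}$, taken over the set of $x = (x_1, \ldots, x_n) \in \mathbb{R}^n$ with $|x_1 \cdots x_n| \leq H^b$, is $O_{n,\theta}(H^b)$. -/

import Mathlib

/-!
Since `1 + ‖x‖ ≥ 1 + |xᵢ|` for every coordinate, `(1 + ‖x‖)^(-n p) ≤ ∏ᵢ (1 + |xᵢ|)^(-p)`, and on
`|x₁ ⋯ xₙ| ≤ S` (off the coordinate hyperplanes) one may insert the factor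
`1 ≤ S^δ ∏ᵢ |xᵢ|^(-δ)` for any `δ ≥ 0`. The resulting majorant is a product of one-variable
functions `|t|^(-δ) (1 + |t|)^(-p)`, integrable when `δ < 1 < δ + p`, so the integral is
`O(S^δ)`. Taking `p = (1 + θ)/n` and `δ = 1/(1 + p)` gives the bound `O(S)` for `S = H^b ≥ 1`.
-/

open MeasureTheory Real Set

theorem integrable_comp_abs_of_integrableOn_Ioi {E : Type*} [NormedAddCommGroup E] {f : ℝ → E}
    (hf : IntegrableOn f (Ioi 0)) : Integrable (fun x => f |x|) := by
  have h_Ioi : IntegrableOn (fun x => f |x|) (Ioi 0) :=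
    hf.congr_fun (fun x hx => by rw [abs_of_pos hx]) measurableSet_Ioi
  have h_Iic : IntegrableOn (fun x => f |x|) (Iic 0) := by
    have hneg : MeasurableEmbedding fun x : ℝ => -x := (Homeomorph.neg ℝ).measurableEmbedding
    rw [← Measure.map_neg_eq_self (volume : Measure ℝ), hneg.integrableOn_map_iff]
    simp_rw [Function.comp_def, abs_neg, neg_preimage, neg_Iic, neg_zero]
    exact (integrableOn_Ici_iff_integrableOn_Ioi (by finiteness)).mpr h_Ioi
  rw [← integrableOn_univ, ← Iic_union_Ioi (a := (0 : ℝ))]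
  exact h_Iic.union h_Ioi

theorem integrableOn_Ioi_rpow_neg_mul_one_add_rpow_neg {δ p : ℝ} (hδ : δ < 1) (hδp : 1 < δ + p) :
    IntegrableOn (fun t : ℝ => t ^ (-δ) * (1 + t) ^ (-p)) (Ioi 0) := by
  have hmeas : AEStronglyMeasurable (fun t : ℝ => t ^ (-δ) * (1 + t) ^ (-p)) :=
    (by fun_prop : Measurable _).aestronglyMeasurable
  have h_Ioc : IntegrableOn (fun t : ℝ => t ^ (-δ) * (1 + t) ^ (-p)) (Ioc 0 1) := by
    have hmaj : IntegrableOn (fun t : ℝ => t ^ (-δ)) (Ioc 0 1) :=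
      (intervalIntegrable_iff_integrableOn_Ioc_of_le zero_le_one).mp
        (intervalIntegral.intervalIntegrable_rpow' (by linarith))
    refine hmaj.mono' hmeas.restrict ?_
    filter_upwards [ae_restrict_mem measurableSet_Ioc] with t ht
    rw [norm_of_nonneg (by have := ht.1; positivity)]
    exact mul_le_of_le_one_right (rpow_nonneg ht.1.le _)
      (rpow_le_one_of_one_le_of_nonpos (by linarith [ht.1]) (by linarith))
  have h_Ioi : IntegrableOn (fun t : ℝ => t ^ (-δ) * (1 + t) ^ (-p)) (Ioi 1) := by
    refine (integrableOn_Ioi_rpow_of_lt (by linarith : -(δ + p) < -1) zero_lt_one).mono'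
      hmeas.restrict ?_
    filter_upwards [ae_restrict_mem measurableSet_Ioi] with t (ht : 1 < t)
    have ht0 : 0 < t := by linarith
    rw [norm_of_nonneg (by positivity), neg_add, rpow_add ht0]
    exact mul_le_mul_of_nonneg_left (rpow_le_rpow_of_nonpos ht0 (by linarith) (by linarith))
      (rpow_nonneg ht0.le _)
  rw [← Ioc_union_Ioi_eq_Ioi zero_le_one]
  exact h_Ioc.union h_Ioi

theorem integrable_abs_rpow_neg_mul_one_add_abs_rpow_neg {δ p : ℝ} (hδ : δ < 1)
    (hδp : 1 < δ + p) : Integrable (fun t : ℝ => |t| ^ (-δ) * (1 + |t|) ^ (-p)) :=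
  integrable_comp_abs_of_integrableOn_Ioi (integrableOn_Ioi_rpow_neg_mul_one_add_rpow_neg hδ hδp)

section ProductRegion

variable {ι : Type*} [Fintype ι]

theorem one_add_norm_rpow_neg_le_prod (x : ι → ℝ) {p : ℝ} (hp : 0 ≤ p) :
    (1 + ‖x‖) ^ (-(Fintype.card ι * p)) ≤ ∏ i, (1 + |x i|) ^ (-p) := by
  rw [finsetProd_rpow _ _ (fun i _ => by positivity), neg_mul_eq_mul_neg,
    rpow_mul (by positivity), rpow_natCast]
  refine rpow_le_rpow_of_nonpos (Finset.prod_pos fun i _ => by positivity) ?_ (by linarith)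
  calc ∏ i, (1 + |x i|) ≤ ∏ _i : ι, (1 + ‖x‖) :=
        Finset.prod_le_prod (fun i _ => by positivity)
          (fun i _ => by simpa using norm_le_pi_norm x i)
    _ = (1 + ‖x‖) ^ Fintype.card ι := Finset.prod_const _

theorem one_le_rpow_mul_prod_abs_rpow_neg {x : ι → ℝ} {S δ : ℝ} (hx : ∏ i, x i ≠ 0)
    (hxS : |∏ i, x i| ≤ S) (hδ : 0 ≤ δ) : 1 ≤ S ^ δ * ∏ i, |x i| ^ (-δ) := by
  have hP : 0 < |∏ i, x i| := abs_pos.mpr hx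
  rw [finsetProd_rpow _ _ (fun i _ => abs_nonneg _), ← Finset.abs_prod,
    rpow_neg hP.le, ← div_eq_mul_inv, ← div_rpow (hP.le.trans hxS) hP.le]
  exact one_le_rpow ((one_le_div hP).mpr hxS) hδ

theorem one_add_norm_rpow_neg_le_rpow_mul_prod {x : ι → ℝ} {S δ p : ℝ} (hx : ∏ i, x i ≠ 0)
    (hxS : |∏ i, x i| ≤ S) (hδ : 0 ≤ δ) (hp : 0 ≤ p) :
    (1 + ‖x‖) ^ (-(Fintype.card ι * p)) ≤ S ^ δ * ∏ i, |x i| ^ (-δ) * (1 + |x i|) ^ (-p) := by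
  rw [Finset.prod_mul_distrib, ← mul_assoc]
  exact (one_add_norm_rpow_neg_le_prod x hp).trans (le_mul_of_one_le_left
    (Finset.prod_nonneg fun i _ => by positivity) (one_le_rpow_mul_prod_abs_rpow_neg hx hxS hδ))

theorem ae_prod_ne_zero : ∀ᵐ x : ι → ℝ, ∏ i, x i ≠ 0 := by
  have h : ∀ᵐ x : ι → ℝ, ∀ i, x i ≠ 0 :=
    ae_all_iff.mpr fun i => by rw [volume_pi]; exact Measure.ae_eval_ne _ i 0
  filter_upwards [h] with x hx
  exact Finset.prod_ne_zero_iff.mpr fun i _ => hx i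

theorem setIntegral_abs_prod_le_one_add_norm_rpow_neg_le {S δ p : ℝ} (hS : 0 ≤ S) (hδ0 : 0 ≤ δ)
    (hδ1 : δ < 1) (hδp : 1 < δ + p) :
    ∫ x in {x : ι → ℝ | |∏ i, x i| ≤ S}, (1 + ‖x‖) ^ (-(Fintype.card ι * p))
      ≤ S ^ δ * (∫ t : ℝ, |t| ^ (-δ) * (1 + |t|) ^ (-p)) ^ Fintype.card ι := by
  set g : (ι → ℝ) → ℝ := fun x => S ^ δ * ∏ i, |x i| ^ (-δ) * (1 + |x i|) ^ (-p)
  have hg : Integrable g := (Integrable.fintype_prod fun _ =>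
    integrable_abs_rpow_neg_mul_one_add_abs_rpow_neg hδ1 hδp).const_mul _
  have hg0 : 0 ≤ g := fun x => by positivity
  have hA : MeasurableSet {x : ι → ℝ | |∏ i, x i| ≤ S} :=
    measurableSet_le (by fun_prop) measurable_const
  have hle : ∀ᵐ x ∂volume.restrict {x : ι → ℝ | |∏ i, x i| ≤ S},
      (1 + ‖x‖) ^ (-(Fintype.card ι * p)) ≤ g x := by
    filter_upwards [ae_restrict_mem hA, ae_restrict_of_ae ae_prod_ne_zero] with x hxS hx
    exact one_add_norm_rpow_neg_le_rpow_mul_prod hx hxS hδ0 (by linarith)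
  calc _ ≤ ∫ x in {x : ι → ℝ | |∏ i, x i| ≤ S}, g x :=
        integral_mono_of_nonneg (.of_forall fun x => by positivity) hg.integrableOn hle
    _ ≤ ∫ x, g x := setIntegral_le_integral hg (.of_forall hg0)
    _ = _ := by
      rw [integral_const_mul,
        integral_fintype_prod_volume_eq_pow fun t : ℝ => |t| ^ (-δ) * (1 + |t|) ^ (-p)]

end ProductRegion

/-- Integral of the sup-norm kernel over the region of small coordinate product:
it is `O_{n,θ}(H^b)`. -/
theorem integral_small_product (n : ℕ) (hn : 1 ≤ n) (θ : ℝ) (hθ : 0 < θ) :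
    ∃ C : ℝ, 0 < C ∧
      ∀ H b : ℝ, 1 ≤ H → b ∈ Set.Ioo (0 : ℝ) 1 →
        (∫ x in {x : Fin n → ℝ | |∏ i, x i| ≤ H ^ b},
            (1 + ‖x‖) ^ (-(1 + θ)) ∂volume)
          ≤ C * H ^ b := by
  have hn0 : (n : ℝ) ≠ 0 := by positivity
  set p : ℝ := (1 + θ) / n
  set δ : ℝ := 1 / (1 + p)
  have hp : 0 < p := by positivity
  have hδ1 : δ < 1 := (div_lt_one (by positivity)).mpr (by linarith)
  have hδp : 1 < δ + p := by
    rw [div_add' _ _ _ (by positivity : (0 : ℝ) < 1 + p).ne', one_lt_div (by positivity)]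
    nlinarith
  have hnp : (n : ℝ) * p = 1 + θ := mul_div_cancel₀ _ hn0
  set I := ∫ t : ℝ, |t| ^ (-δ) * (1 + |t|) ^ (-p)
  refine ⟨I ^ n + 1, by positivity, fun H b hH hb => ?_⟩
  have hS : 1 ≤ H ^ b := one_le_rpow hH hb.1.le
  calc _ ≤ (H ^ b) ^ δ * I ^ n := by
        simpa only [hnp, Fintype.card_fin] using
          setIntegral_abs_prod_le_one_add_norm_rpow_neg_le (ι := Fin n) (S := H ^ b)
            (by positivity) (by positivity) hδ1 hδp
    _ ≤ H ^ b * I ^ n := by gcongr; exact rpow_le_self_of_one_le hS hδ1.le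
    _ ≤ (I ^ n + 1) * H ^ b := by nlinarith [hS]
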